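/- In Algorithm 1 (exact ONE-L1), the Lagrange multiplier sequence satisfies Φ'y_{t+1}* ∈ ∂‖x_{t+1}*‖₁; consequently ‖Φ'y_{t+1}*‖_∞ ≤ 1 and, since Φ is orthonormal, ‖y_{t+1}*‖₂ ≤ √N, so the sequence {y_t*} is bounded. -/
import Mathlib


open Matrix

noncomputable def softThresh (l w : ℝ) : ℝ := Real.sign w * max (|w| - l) 0

noncomputable def softThreshV {ι : Type*} (l : ℝ) (w : ι → ℝ) : ι → ℝ :=
  fun i => softThresh l (w i)

noncomputable def l1norm {ι : Type*} [Fintype ι] (x : ι → ℝ) : ℝ := ∑ i, |x i|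

noncomputable def l2norm {ι : Type*} [Fintype ι] (x : ι → ℝ) : ℝ :=
  Real.sqrt (∑ i, (x i)^2)

noncomputable def ip {ι : Type*} [Fintype ι] (u v : ι → ℝ) : ℝ := ∑ i, u i * v i

noncomputable def lag {ι : Type*} [Fintype ι] (Φ : Matrix ι ι ℝ) (y : ι → ℝ) (μ : ℝ)
    (x p : ι → ℝ) : ℝ :=
  l1norm x + ip (p - Φ.mulVec x) y + (μ/2) * (l2norm (p - Φ.mulVec x))^2

/-- `v` is a subgradient of the `ℓ₁` norm at `x`. -/
def inSubdiffL1 {ι : Type*} [Fintype ι] (x v : ι → ℝ) : Prop :=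
  ∀ z, l1norm x + ip v (z - x) ≤ l1norm z

section Aux

variable {ι : Type*} [Fintype ι] [DecidableEq ι]

lemma ip_sub_left (u v w : ι → ℝ) : ip (u - v) w = ip u w - ip v w := by
  simp [ip, sub_mul, Finset.sum_sub_distrib]

lemma ip_add_left (u v w : ι → ℝ) : ip (u + v) w = ip u w + ip v w := by
  simp [ip, add_mul, Finset.sum_add_distrib]

lemma ip_smul_left (c : ℝ) (u w : ι → ℝ) : ip (c • u) w = c * ip u w := by
  simp [ip, Finset.mul_sum, mul_assoc]

lemma ip_comm (u v : ι → ℝ) : ip u v = ip v u := by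
  simp [ip, mul_comm]

lemma ip_sub_right (u v w : ι → ℝ) : ip u (v - w) = ip u v - ip u w := by
  rw [ip_comm, ip_sub_left, ip_comm v u, ip_comm w u]

lemma ip_add_right (u v w : ι → ℝ) : ip u (v + w) = ip u v + ip u w := by
  rw [ip_comm, ip_add_left, ip_comm v u, ip_comm w u]

lemma ip_smul_right (c : ℝ) (u w : ι → ℝ) : ip u (c • w) = c * ip u w := by
  rw [ip_comm, ip_smul_left, ip_comm]

lemma ip_self_nonneg (u : ι → ℝ) : 0 ≤ ip u u :=
  Finset.sum_nonneg fun i _ => mul_self_nonneg _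

lemma ip_mulVec_left (Φ : Matrix ι ι ℝ) (u v : ι → ℝ) :
    ip (Φ.mulVec u) v = ip u (Φᵀ.mulVec v) := by
  simp only [ip, Matrix.mulVec, dotProduct, Matrix.transpose_apply,
    Finset.sum_mul, Finset.mul_sum]
  rw [Finset.sum_comm]
  exact Finset.sum_congr rfl fun i _ => Finset.sum_congr rfl fun j _ => by ring

lemma ip_mulVec_self (Φ : Matrix ι ι ℝ) (hΦ : Φᵀ * Φ = 1) (u : ι → ℝ) :
    ip (Φ.mulVec u) (Φ.mulVec u) = ip u u := by
  rw [ip_mulVec_left, Matrix.mulVec_mulVec, hΦ, Matrix.one_mulVec]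

lemma l2sq (u : ι → ℝ) : (l2norm u)^2 = ip u u := by
  have h : ∑ i, (u i)^2 = ip u u := by simp [ip, pow_two]
  rw [l2norm, Real.sq_sqrt (Finset.sum_nonneg fun i _ => sq_nonneg _), h]

lemma lag_eq (Φ : Matrix ι ι ℝ) (y : ι → ℝ) (μ : ℝ) (x p : ι → ℝ) :
    lag Φ y μ x p = l1norm x + ip (p - Φ.mulVec x) y
      + (μ/2) * ip (p - Φ.mulVec x) (p - Φ.mulVec x) := by
  rw [lag, l2sq]

lemma ip_quad (Φ : Matrix ι ι ℝ) (hΦ : Φᵀ * Φ = 1) (a w : ι → ℝ) :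
    ip (a - Φ.mulVec w) (a - Φ.mulVec w)
      = ip a a - 2 * ip w (Φᵀ.mulVec a) + ip w w := by
  rw [ip_sub_left, ip_sub_right a a (Φ.mulVec w),
    ip_sub_right (Φ.mulVec w) a (Φ.mulVec w), ip_mulVec_self Φ hΦ,
    ip_mulVec_left Φ w a, ip_comm a (Φ.mulVec w), ip_mulVec_left Φ w a]
  ring

lemma key_ineq (Φ : Matrix ι ι ℝ) (hΦ : Φᵀ * Φ = 1) (y : ι → ℝ) (μ : ℝ) (x p z : ι → ℝ)
    (h : lag Φ y μ x p ≤ lag Φ y μ z p) :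
    l1norm x + ip (Φᵀ.mulVec (y + μ • (p - Φ.mulVec x))) (z - x)
      ≤ l1norm z + μ/2 * ip (z - x) (z - x) := by
  have hpz : p - Φ.mulVec z
      = (p - Φ.mulVec x) - Φ.mulVec (z - x) := by
    rw [Matrix.mulVec_sub]; abel
  have e1 : ip ((p - Φ.mulVec x) - Φ.mulVec (z - x)) y
      = ip (p - Φ.mulVec x) y - ip (z - x) (Φᵀ.mulVec y) := by
    rw [ip_sub_left, ip_mulVec_left]
  have e2 : ip ((p - Φ.mulVec x) - Φ.mulVec (z - x)) ((p - Φ.mulVec x) - Φ.mulVec (z - x))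
      = ip (p - Φ.mulVec x) (p - Φ.mulVec x)
        - 2 * ip (z - x) (Φᵀ.mulVec (p - Φ.mulVec x)) + ip (z - x) (z - x) :=
    ip_quad Φ hΦ _ _
  have e3 : ip (Φᵀ.mulVec (y + μ • (p - Φ.mulVec x))) (z - x)
      = ip (z - x) (Φᵀ.mulVec y) + μ * ip (z - x) (Φᵀ.mulVec (p - Φ.mulVec x)) := by
    rw [Matrix.mulVec_add, Matrix.mulVec_smul, ip_add_left, ip_smul_left,
      ip_comm (Φᵀ.mulVec y) (z - x), ip_comm (Φᵀ.mulVec (p - Φ.mulVec x)) (z - x)]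
  rw [lag_eq, lag_eq, hpz, e1, e2] at h
  rw [e3]
  linarith

lemma l1_convex (x z : ι → ℝ) {s : ℝ} (h0 : 0 ≤ s) (h1 : s ≤ 1) :
    l1norm (x + s • (z - x)) ≤ (1 - s) * l1norm x + s * l1norm z := by
  simp only [l1norm, Finset.mul_sum, ← Finset.sum_add_distrib]
  apply Finset.sum_le_sum
  intro i _
  have he : x i + s * (z i - x i) = (1 - s) * x i + s * z i := by ring
  simp only [Pi.add_apply, Pi.smul_apply, Pi.sub_apply, smul_eq_mul, he]
  calc |(1 - s) * x i + s * z i| ≤ |(1 - s) * x i| + |s * z i| := abs_add_le _ _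
    _ = (1 - s) * |x i| + s * |z i| := by
        rw [abs_mul, abs_mul, abs_of_nonneg (by linarith), abs_of_nonneg h0]

lemma subgrad_of_approx (x v : ι → ℝ) (c : ℝ) (hc : 0 ≤ c)
    (h : ∀ z, l1norm x + ip v (z - x) ≤ l1norm z + c * ip (z - x) (z - x)) :
    inSubdiffL1 x v := by
  intro z
  have hD0 : 0 ≤ c * ip (z - x) (z - x) := mul_nonneg hc (ip_self_nonneg _)
  have main : ∀ s : ℝ, 0 < s → s ≤ 1 →
      ip v (z - x) ≤ l1norm z - l1norm x + s * (c * ip (z - x) (z - x)) := by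
    intro s hs hs1
    have h1 := h (x + s • (z - x))
    have e1 : (x + s • (z - x)) - x = s • (z - x) := by abel
    rw [e1, ip_smul_right, ip_smul_left, ip_smul_right] at h1
    have hconv := l1_convex x z (le_of_lt hs) hs1
    have h2 : s * ip v (z - x)
        ≤ s * (l1norm z - l1norm x + s * (c * ip (z - x) (z - x))) := by
      nlinarith [h1, hconv]
    exact le_of_mul_le_mul_left h2 hs
  have heps : ∀ ε : ℝ, 0 < ε → ip v (z - x) ≤ l1norm z - l1norm x + ε := by
    intro ε hε
    have hpos : (0:ℝ) < c * ip (z - x) (z - x) + 1 := by linarith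
    have hs0 : 0 < min 1 (ε / (c * ip (z - x) (z - x) + 1)) :=
      lt_min one_pos (div_pos hε hpos)
    have h4 := main _ hs0 (min_le_left _ _)
    have hs2 : min 1 (ε / (c * ip (z - x) (z - x) + 1))
        ≤ ε / (c * ip (z - x) (z - x) + 1) := min_le_right _ _
    have h6 : ε / (c * ip (z - x) (z - x) + 1) * (c * ip (z - x) (z - x) + 1) = ε :=
      div_mul_cancel₀ _ (ne_of_gt hpos)
    have h5 : min 1 (ε / (c * ip (z - x) (z - x) + 1)) * (c * ip (z - x) (z - x)) ≤ ε := by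
      nlinarith [mul_le_mul_of_nonneg_right hs2 hD0, div_nonneg hε.le hpos.le]
    linarith
  have hfin : ip v (z - x) ≤ l1norm z - l1norm x := by
    by_contra hcon
    push_neg at hcon
    have := heps ((ip v (z - x) - (l1norm z - l1norm x)) / 2) (by linarith)
    linarith
  linarith

lemma linf_bound (x v : ι → ℝ) (h : inSubdiffL1 x v) (i : ι) :
    |v i| ≤ 1 := by
  have key : ∀ a : ℝ, v i * a ≤ |x i + a| - |x i| := by
    intro a
    have h1 := h (Function.update x i (x i + a))
    have e1 : ip v (Function.update x i (x i + a) - x) = v i * a := by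
      rw [ip]
      rw [Finset.sum_eq_single i]
      · simp
      · intro j _ hj
        simp [Function.update_of_ne hj]
      · simp
    have e2 : l1norm (Function.update x i (x i + a)) - l1norm x = |x i + a| - |x i| := by
      rw [l1norm, l1norm, ← Finset.sum_sub_distrib]
      rw [Finset.sum_eq_single i]
      · simp
      · intro j _ hj
        simp [Function.update_of_ne hj]
      · simp
    rw [e1] at h1
    linarith
  have k1 := key 1
  have k2 := key (-1)
  have t1 : |x i + 1| ≤ |x i| + 1 := by
    calc |x i + 1| ≤ |x i| + |(1:ℝ)| := abs_add_le _ _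
      _ = |x i| + 1 := by norm_num
  have t2 : |x i + (-1)| ≤ |x i| + 1 := by
    calc |x i + (-1)| ≤ |x i| + |(-1:ℝ)| := abs_add_le _ _
      _ = |x i| + 1 := by norm_num
  rw [abs_le]
  constructor <;> nlinarith

lemma l2_bound_aux (Φ : Matrix ι ι ℝ) (hΦ : Φᵀ * Φ = 1) (y : ι → ℝ)
    (h : ∀ i, |Φᵀ.mulVec y i| ≤ 1) :
    l2norm y ≤ Real.sqrt (Fintype.card ι) := by
  have hΦ' : Φᵀᵀ * Φᵀ = 1 := by
    rw [Matrix.transpose_transpose, mul_eq_one_comm.mp hΦ]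
  have h1 : ip y y = ip (Φᵀ.mulVec y) (Φᵀ.mulVec y) := (ip_mulVec_self Φᵀ hΦ' y).symm
  have h2 : ip (Φᵀ.mulVec y) (Φᵀ.mulVec y) ≤ (Fintype.card ι : ℝ) := by
    rw [ip]
    calc ∑ i, Φᵀ.mulVec y i * Φᵀ.mulVec y i ≤ ∑ _i : ι, (1:ℝ) := by
          apply Finset.sum_le_sum
          intro j _
          have := abs_le.mp (h j)
          nlinarith
      _ = (Fintype.card ι : ℝ) := by simp
  rw [l2norm]
  have e : ∑ i, (y i)^2 = ip y y := by simp [ip, pow_two]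
  rw [e]
  exact Real.sqrt_le_sqrt (by linarith)

end Aux

/-- In Algorithm 1, `Φᵀy_{t+1}* ∈ ∂‖x_{t+1}*‖₁`, hence `‖Φᵀy_{t+1}*‖_∞ ≤ 1`,
`‖y_{t+1}*‖₂ ≤ √N`, and the sequence `{y_t*}` is bounded. -/
theorem alg1_multipliers_bounded {n m : ℕ}
    (Φ : Matrix (Fin n ⊕ Fin m) (Fin n ⊕ Fin m) ℝ) (hΦ : Φᵀ * Φ = 1)
    (b : Fin n → ℝ) (μ : ℕ → ℝ) (hμ : ∀ t, 0 < μ t)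
    (xs ps ys : ℕ → (Fin n ⊕ Fin m) → ℝ)
    (hfeas : ∀ t i, ps (t+1) (Sum.inl i) = b i)
    (hmin : ∀ t (x p : (Fin n ⊕ Fin m) → ℝ), (∀ i, p (Sum.inl i) = b i) →
      lag Φ (ys t) (μ t) (xs (t+1)) (ps (t+1)) ≤ lag Φ (ys t) (μ t) x p)
    (hy : ∀ t, ys (t+1) = ys t + μ t • (ps (t+1) - Φ.mulVec (xs (t+1))))
    (hy0 : ys 0 = 0) :
    (∀ t, inSubdiffL1 (xs (t+1)) (Φᵀ.mulVec (ys (t+1))) ∧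
      (∀ i, |Φᵀ.mulVec (ys (t+1)) i| ≤ 1) ∧
      l2norm (ys (t+1)) ≤ Real.sqrt ((n : ℝ) + m)) ∧
    ∃ M : ℝ, ∀ t, l2norm (ys t) ≤ M := by
  have hcard : (Fintype.card (Fin n ⊕ Fin m) : ℝ) = (n : ℝ) + m := by
    simp [Fintype.card_sum]
  have main : ∀ t, inSubdiffL1 (xs (t+1)) (Φᵀ.mulVec (ys (t+1))) := by
    intro t
    apply subgrad_of_approx _ _ (μ t / 2) (by linarith [hμ t])
    intro z
    have hle := hmin t z (ps (t+1)) (hfeas t)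
    have hk := key_ineq Φ hΦ (ys t) (μ t) (xs (t+1)) (ps (t+1)) z hle
    rwa [← hy t] at hk
  have hinf : ∀ t i, |Φᵀ.mulVec (ys (t+1)) i| ≤ 1 :=
    fun t i => linf_bound _ _ (main t) i
  have hl2 : ∀ t, l2norm (ys (t+1)) ≤ Real.sqrt ((n : ℝ) + m) := by
    intro t
    have := l2_bound_aux Φ hΦ (ys (t+1)) (hinf t)
    rwa [hcard] at this
  refine ⟨fun t => ⟨main t, hinf t, hl2 t⟩, ⟨Real.sqrt ((n : ℝ) + m), fun t => ?_⟩⟩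
  cases t with
  | zero =>
      rw [hy0]
      have : l2norm (0 : (Fin n ⊕ Fin m) → ℝ) = 0 := by simp [l2norm]
      rw [this]
      exact Real.sqrt_nonneg _
  | succ t => exact hl2 t
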